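/- arXiv:2605.22019 — 4 statements merged into one kernel-verified Lean document; each statement's English description precedes it below -/
import Mathlib

section
/- Let a < 0, 0 < q < 1, and b² < a² q. Then there exist μ > 0 and ε > 0 such that for all real u, v: (2a + μ) u² + 2 b u v - μ q v² ≤ -ε (u² + v²). -/
theorem stmt_5 (a b q : ℝ) (ha : a < 0) (hq0 : 0 < q) (hq1 : q < 1)
    (hb : b ^ 2 < a ^ 2 * q) :
    ∃ μ > (0 : ℝ), ∃ ε > (0 : ℝ), ∀ u v : ℝ,
      (2 * a + μ) * u ^ 2 + 2 * b * u * v - μ * q * v ^ 2 ≤ -ε * (u ^ 2 + v ^ 2) := by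
  have hd : 0 < a ^ 2 * q - b ^ 2 := by linarith [sq_nonneg b]
  have hden : 0 < 2 * (-a) * (1 + q) := by nlinarith
  set ε : ℝ := (a ^ 2 * q - b ^ 2) / (2 * (-a) * (1 + q)) with hε
  have hεpos : 0 < ε := div_pos hd hden
  refine ⟨-a, by linarith, ε, hεpos, fun u v => ?_⟩
  have key : ε * (2 * (-a) * (1 + q)) = a ^ 2 * q - b ^ 2 := by
    rw [hε, div_mul_cancel₀]
    positivity
  have hε1 : ε < -a := by nlinarith [sq_nonneg b]
  have hε2 : ε < -a * q := by nlinarith [sq_nonneg b]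
  have hα : 0 < -a - ε := by linarith
  have hprod : b ^ 2 ≤ (a + ε) * (a * q + ε) := by nlinarith [sq_nonneg ε]
  nlinarith [sq_nonneg ((-a - ε) * u - b * v), mul_nonneg hα.le (sq_nonneg v), mul_nonneg hα.le (sq_nonneg u), sq_nonneg v, sq_nonneg u]
end

section
/- Let x : [0,∞) → ℝ be continuously differentiable and satisfy ẋ(t) = a x(t) + b x(qt) for all t ≥ 0, where a < 0, 0 < q < 1, and b² < a² q. Define V(t) = x(t)² + μ ∫_{qt}^{t} x(s)² ds with μ = -a. Then V is nonincreasing; moreover V̇(t) = (2a+μ) x(t)² + 2b x(t)x(qt) − μ q x(qt)² ≤ 0 for all t ≥ 0. -/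
/-!
By the Leibniz rule, `V̇` is a quadratic form in `(x t, x (q t))`; with `μ = -a` it is
`a X² + 2 b X Y + a q Y²`, which is negative semidefinite because `a < 0` and `b² < a² q`.
Monotonicity then follows from the mean value theorem.
-/

open intervalIntegral

theorem hasDerivAt_integral_from_const_mul {f : ℝ → ℝ} (hf : Continuous f) (q t : ℝ) :
    HasDerivAt (fun u => ∫ s in (q * u)..u, f s) (f t - q * f (q * t)) t := by
  have hprim : ∀ u, HasDerivAt (fun v => ∫ s in (0 : ℝ)..v, f s) (f u) u := fun u =>
    integral_hasDerivAt_right (hf.intervalIntegrable _ _) (hf.stronglyMeasurableAtFilter _ _)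
      hf.continuousAt
  have hinner : HasDerivAt (fun u => ∫ s in (0 : ℝ)..(q * u), f s) (f (q * t) * (q * 1)) t :=
    (hprim (q * t)).comp t ((hasDerivAt_id' t).const_mul q)
  have hsplit : (fun u => ∫ s in (q * u)..u, f s)
      = fun u => (∫ s in (0 : ℝ)..u, f s) - ∫ s in (0 : ℝ)..(q * u), f s := by
    funext u
    exact (integral_interval_sub_left (hf.intervalIntegrable _ _) (hf.intervalIntegrable _ _)).symm
  rw [hsplit]
  exact ((hprim t).sub hinner).congr_deriv (by ring)

theorem quadratic_nonpos_of_sq_le {a b q : ℝ} (ha : a < 0) (hb : b ^ 2 ≤ a ^ 2 * q) (u v : ℝ) :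
    a * u ^ 2 + 2 * b * u * v + a * q * v ^ 2 ≤ 0 := by
  -- multiplied by `a`, the form is `(a u + b v)² + (a² q - b²) v² ≥ 0`
  have hmul : 0 ≤ a * (a * u ^ 2 + 2 * b * u * v + a * q * v ^ 2) := by
    nlinarith [sq_nonneg (a * u + b * v), mul_nonneg (sub_nonneg.2 hb) (sq_nonneg v)]
  exact nonpos_of_mul_nonneg_right hmul ha

theorem hasDerivAt_sq_add_mul_integral_sq {x : ℝ → ℝ} (hxc : Continuous x) {a b q μ t : ℝ}
    (hx : HasDerivAt x (a * x t + b * x (q * t)) t) :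
    HasDerivAt (fun t => x t ^ 2 + μ * ∫ s in (q * t)..t, x s ^ 2)
      ((2 * a + μ) * x t ^ 2 + 2 * b * x t * x (q * t) - μ * q * x (q * t) ^ 2) t := by
  have hint := hasDerivAt_integral_from_const_mul (f := fun s => x s ^ 2) (by fun_prop) q t
  refine ((hx.fun_pow 2).add (hint.const_mul μ)).congr_deriv ?_
  norm_num
  ring

theorem stmt_6_general (a b q : ℝ) (ha : a < 0)
    (hb : b ^ 2 < a ^ 2 * q)
    (x : ℝ → ℝ) (hxc : Continuous x)
    (hx : ∀ t : ℝ, 0 ≤ t → HasDerivAt x (a * x t + b * x (q * t)) t)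
    (μ : ℝ) (hμ : μ = -a)
    (V : ℝ → ℝ)
    (hV : ∀ t, V t = x t ^ 2 + μ * ∫ s in (q * t)..t, x s ^ 2) :
    AntitoneOn V (Set.Ici 0) ∧
    (∀ t : ℝ, 0 ≤ t →
      HasDerivAt V ((2 * a + μ) * x t ^ 2 + 2 * b * x t * x (q * t) - μ * q * x (q * t) ^ 2) t ∧
      (2 * a + μ) * x t ^ 2 + 2 * b * x t * x (q * t) - μ * q * x (q * t) ^ 2 ≤ 0) := by
  obtain rfl : V = fun t => x t ^ 2 + μ * ∫ s in (q * t)..t, x s ^ 2 := funext hV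
  have hderiv : ∀ t : ℝ, 0 ≤ t → HasDerivAt _ _ t := fun t ht =>
    hasDerivAt_sq_add_mul_integral_sq (μ := μ) hxc (hx t ht)
  have hnonpos : ∀ t : ℝ,
      (2 * a + μ) * x t ^ 2 + 2 * b * x t * x (q * t) - μ * q * x (q * t) ^ 2 ≤ 0 := by
    intro t
    subst hμ
    linear_combination quadratic_nonpos_of_sq_le ha hb.le (x t) (x (q * t))
  refine ⟨antitoneOn_of_hasDerivWithinAt_nonpos (convex_Ici 0)
    (fun t ht => (hderiv t ht).continuousAt.continuousWithinAt)
    (fun t ht => (hderiv t (interior_subset ht)).hasDerivWithinAt) (fun t _ => hnonpos t),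
    fun t ht => ⟨hderiv t ht, hnonpos t⟩⟩

theorem stmt_6 (a b q : ℝ) (ha : a < 0) (hq0 : 0 < q) (hq1 : q < 1)
    (hb : b ^ 2 < a ^ 2 * q)
    (x : ℝ → ℝ) (hxc : Continuous x)
    (hx : ∀ t : ℝ, 0 ≤ t → HasDerivAt x (a * x t + b * x (q * t)) t)
    (μ : ℝ) (hμ : μ = -a)
    (V : ℝ → ℝ)
    (hV : ∀ t, V t = x t ^ 2 + μ * ∫ s in (q * t)..t, x s ^ 2) :
    AntitoneOn V (Set.Ici 0) ∧
    (∀ t : ℝ, 0 ≤ t →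
      HasDerivAt V ((2 * a + μ) * x t ^ 2 + 2 * b * x t * x (q * t) - μ * q * x (q * t) ^ 2) t ∧
      (2 * a + μ) * x t ^ 2 + 2 * b * x t * x (q * t) - μ * q * x (q * t) ^ 2 ≤ 0) :=
  stmt_6_general a b q ha hb x hxc hx μ hμ V hV
end

section
/- Let x : [0,∞) → ℝ solve ẋ(t) = a x(t) + b x(qt) with a > 0, b > 0, 0 < q < 1, and x(0) > 0. Then x(t) > 0 for all t ≥ 0 and x is strictly increasing; in fact x(t) ≥ x(0) e^{a t} for all t ≥ 0. -/
/-!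
Up to the first zero `T` of `x`, both `x t` and `x (q t)` are positive, so `ẋ > 0` on `(0, T)` and
`x T > x 0 > 0`, a contradiction; hence `x > 0` on `[0, ∞)`, which makes `ẋ` positive there.
Moreover `(x t e^{-a t})' = b x (q t) e^{-a t} ≥ 0`, which gives `x t ≥ x 0 e^{a t}`.
-/

open Set Real

lemma exists_first_nonpos {f : ℝ → ℝ} {a b : ℝ} (hf : ContinuousOn f (Icc a b)) (hab : a ≤ b)
    (ha : 0 < f a) (hb : f b ≤ 0) :
    ∃ T ∈ Ioc a b, f T ≤ 0 ∧ ∀ s ∈ Ico a T, 0 < f s := by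
  set S := Icc a b ∩ f ⁻¹' Iic 0
  have hS : IsCompact S :=
    isCompact_Icc.of_isClosed_subset (hf.preimage_isClosed_of_isClosed isClosed_Icc isClosed_Iic)
      inter_subset_left
  have hSne : S.Nonempty := ⟨b, ⟨hab, le_rfl⟩, hb⟩
  obtain ⟨⟨haT, hTb⟩, hfT⟩ := hS.sInf_mem hSne
  have haT' : a < sInf S := haT.lt_of_ne fun h => (h ▸ hfT : f a ≤ 0).not_gt ha
  refine ⟨sInf S, ⟨haT', hTb⟩, hfT, fun s ⟨has, hsT⟩ => ?_⟩
  by_contra! hfs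
  exact hsT.not_ge (csInf_le hS.bddBelow ⟨⟨has, hsT.le.trans hTb⟩, hfs⟩)

section Pantograph

variable {a b q : ℝ} {x : ℝ → ℝ}

lemma pantograph_pos (ha : 0 ≤ a) (hb : 0 ≤ b) (hq0 : 0 ≤ q) (hq1 : q ≤ 1)
    (hx : ∀ t : ℝ, 0 ≤ t → HasDerivAt x (a * x t + b * x (q * t)) t) (hx0 : 0 < x 0)
    {t : ℝ} (ht : 0 ≤ t) : 0 < x t := by
  by_contra! hxt
  have hcont : ContinuousOn x (Icc 0 t) := fun s hs => (hx s hs.1).continuousAt.continuousWithinAt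
  obtain ⟨T, ⟨hT0, hTt⟩, hxT, hposT⟩ := exists_first_nonpos hcont ht hx0 hxt
  have hmono : MonotoneOn x (Icc 0 T) := by
    refine monotoneOn_of_hasDerivWithinAt_nonneg (convex_Icc 0 T)
      (fun s hs => (hx s hs.1).continuousAt.continuousWithinAt)
      (fun s hs => (hx s (interior_subset hs).1).hasDerivWithinAt) fun s hs => ?_
    rw [interior_Icc] at hs
    have hqs : q * s ∈ Ico 0 T :=
      ⟨mul_nonneg hq0 hs.1.le, (mul_le_of_le_one_left hs.1.le hq1).trans_lt hs.2⟩
    have := hposT s ⟨hs.1.le, hs.2⟩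
    have := hposT _ hqs
    positivity
  have := hmono ⟨le_rfl, hT0.le⟩ ⟨hT0.le, le_rfl⟩ hT0.le
  linarith

lemma pantograph_strictMonoOn (ha : 0 < a) (hb : 0 ≤ b) (hq0 : 0 ≤ q)
    (hx : ∀ t : ℝ, 0 ≤ t → HasDerivAt x (a * x t + b * x (q * t)) t)
    (hpos : ∀ t : ℝ, 0 ≤ t → 0 < x t) : StrictMonoOn x (Ici 0) := by
  refine strictMonoOn_of_hasDerivWithinAt_pos (convex_Ici 0)
    (fun s hs => (hx s hs).continuousAt.continuousWithinAt)
    (fun s hs => (hx s (interior_subset hs)).hasDerivWithinAt) fun s hs => ?_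
  rw [interior_Ici] at hs
  have := hpos s hs.le
  have := hpos (q * s) (mul_nonneg hq0 hs.le)
  positivity

lemma pantograph_exp_le (hb : 0 ≤ b) (hq0 : 0 ≤ q)
    (hx : ∀ t : ℝ, 0 ≤ t → HasDerivAt x (a * x t + b * x (q * t)) t)
    (hpos : ∀ t : ℝ, 0 ≤ t → 0 < x t) {t : ℝ} (ht : 0 ≤ t) :
    x 0 * exp (a * t) ≤ x t := by
  have hderiv : ∀ s, 0 ≤ s →
      HasDerivAt (fun u => x u * exp (-a * u)) (b * x (q * s) * exp (-a * s)) s := fun s hs =>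
    ((hx s hs).mul ((hasDerivAt_id' s).const_mul (-a)).exp).congr_deriv (by ring)
  have hmono : MonotoneOn (fun u => x u * exp (-a * u)) (Ici 0) := by
    refine monotoneOn_of_hasDerivWithinAt_nonneg (convex_Ici 0)
      (fun s hs => (hderiv s hs).continuousAt.continuousWithinAt)
      (fun s hs => (hderiv s (interior_subset hs)).hasDerivWithinAt) fun s hs => ?_
    rw [interior_Ici] at hs
    have := hpos (q * s) (mul_nonneg hq0 hs.le)
    positivity
  have h0t := hmono self_mem_Ici ht ht
  simp only [mul_zero, exp_zero, mul_one] at h0t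
  calc x 0 * exp (a * t) ≤ x t * exp (-a * t) * exp (a * t) := by gcongr
    _ = x t := by rw [mul_assoc, ← exp_add]; simp

end Pantograph

theorem stmt_8 (a b q : ℝ) (ha : 0 < a) (hb : 0 < b) (hq0 : 0 < q) (hq1 : q < 1)
    (x : ℝ → ℝ)
    (hx : ∀ t : ℝ, 0 ≤ t → HasDerivAt x (a * x t + b * x (q * t)) t)
    (hx0 : 0 < x 0) :
    (∀ t : ℝ, 0 ≤ t → 0 < x t) ∧
    StrictMonoOn x (Set.Ici 0) ∧
    (∀ t : ℝ, 0 ≤ t → x 0 * Real.exp (a * t) ≤ x t) := by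
  have hpos : ∀ t : ℝ, 0 ≤ t → 0 < x t := fun t ht =>
    pantograph_pos ha.le hb.le hq0.le hq1.le hx hx0 ht
  exact ⟨hpos, pantograph_strictMonoOn ha hb.le hq0.le hx hpos,
    fun t ht => pantograph_exp_le hb.le hq0.le hx hpos ht⟩
end

section
/- Let a, b, q satisfy 0 < q < 1. The function x(t) = ∑_{n=0}^∞ (t^n / n!) c_n with c_0 = 1 and c_{n+1} = (a + b q^n) c_n defines an entire function satisfying x'(t) = a x(t) + b x(qt) for all t ∈ ℝ. -/
/-!
The coefficients grow at most geometrically, `|c n| ≤ (|a| + |b|) ^ n`, so the exponential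
generating function `x` of `c` converges everywhere and may be differentiated termwise; its
derivative is the exponential generating function of the shifted sequence `n ↦ c (n + 1)`.
Substituting the recurrence `c (n + 1) = a c n + b q ^ n c n` splits that series into
`a x t + b x (q t)`, since `(q t) ^ n = q ^ n t ^ n`.
-/

open Nat

noncomputable def egf (c : ℕ → ℝ) (t : ℝ) : ℝ :=
  ∑' n, t ^ n / n ! * c n

section ExpGenFun

variable {c : ℕ → ℝ} {M : ℝ}

lemma abs_le_pow_of_succ_eq_mul {r : ℕ → ℝ} (h0 : c 0 = 1) (hrec : ∀ n, c (n + 1) = r n * c n)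
    (hr : ∀ n, |r n| ≤ M) (n : ℕ) : |c n| ≤ M ^ n := by
  induction n with
  | zero => simp [h0]
  | succ n ih =>
    calc |c (n + 1)| = |r n| * |c n| := by rw [hrec, abs_mul]
      _ ≤ M * M ^ n := by gcongr; exacts [(abs_nonneg _).trans (hr 0), hr n]
      _ = M ^ (n + 1) := (pow_succ' M n).symm

lemma norm_pow_div_factorial_mul_le {C R y : ℝ} (hc : ∀ n, |c n| ≤ C * M ^ n) (hy : |y| ≤ R)
    (n : ℕ) : ‖y ^ n / n ! * c n‖ ≤ C * ((R * M) ^ n / n !) := by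
  rw [Real.norm_eq_abs, abs_mul, abs_div, abs_pow, Nat.abs_cast, div_mul_eq_mul_div,
    ← mul_div_assoc]
  refine div_le_div_of_nonneg_right ?_ (n !).cast_nonneg
  calc |y| ^ n * |c n| ≤ R ^ n * (C * M ^ n) :=
        mul_le_mul (pow_le_pow_left₀ (abs_nonneg y) hy n) (hc n) (abs_nonneg _)
          (pow_nonneg ((abs_nonneg y).trans hy) n)
    _ = C * (R * M) ^ n := by ring

lemma summable_pow_div_factorial_mul (hc : ∀ n, |c n| ≤ M ^ n) (t : ℝ) :
    Summable fun n => t ^ n / n ! * c n :=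
  ((Real.summable_pow_div_factorial (|t| * M)).mul_left 1).of_norm_bounded
    (norm_pow_div_factorial_mul_le (by simpa using hc) le_rfl)

lemma egf_eq_add_tsum (hc : ∀ n, |c n| ≤ M ^ n) (t : ℝ) :
    egf c t = c 0 + ∑' n, t ^ (n + 1) / (n + 1)! * c (n + 1) := by
  simp [egf, (summable_pow_div_factorial_mul hc t).tsum_eq_zero_add]

lemma hasDerivAt_pow_succ_div_factorial_succ (n : ℕ) (y : ℝ) :
    HasDerivAt (fun y : ℝ => y ^ (n + 1) / (n + 1)!) (y ^ n / n !) y := by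
  refine ((hasDerivAt_pow (n + 1) y).div_const _).congr_deriv ?_
  rw [Nat.factorial_succ]
  push_cast
  field_simp

theorem hasDerivAt_egf (hc : ∀ n, |c n| ≤ M ^ n) (t : ℝ) :
    HasDerivAt (egf c) (egf (fun n => c (n + 1)) t) t := by
  -- Differentiate the tail of the series termwise on a ball around `t`, where the
  -- derivatives `y ^ n / n ! * c (n + 1)` are dominated by a summable sequence.
  set R := |t| + 1
  have hu : Summable fun n => M * ((R * M) ^ n / n !) :=
    (Real.summable_pow_div_factorial _).mul_left _
  have hbound : ∀ n, ∀ y ∈ Metric.ball (0 : ℝ) R, ‖y ^ n / n ! * c (n + 1)‖ ≤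
      M * ((R * M) ^ n / n !) := by
    refine fun n y hy => norm_pow_div_factorial_mul_le (c := fun n => c (n + 1)) (fun n => ?_) ?_ n
    · exact (hc (n + 1)).trans_eq (pow_succ' M n)
    · simpa using (mem_ball_zero_iff.mp hy).le
  have htail := hasDerivAt_tsum_of_isPreconnected (y := t) hu Metric.isOpen_ball
    (convex_ball (0 : ℝ) R).isPreconnected
    (fun n y _ => (hasDerivAt_pow_succ_div_factorial_succ n y).mul_const (c (n + 1))) hbound
    (Metric.mem_ball_self (by positivity)) (by simp) (by simp [R])
  rw [funext (egf_eq_add_tsum hc)]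
  exact htail.const_add (c 0)

lemma egf_succ_eq_of_succ_eq {a b q : ℝ} (hc : ∀ n, |c n| ≤ M ^ n)
    (hrec : ∀ n, c (n + 1) = (a + b * q ^ n) * c n) (t : ℝ) :
    egf (fun n => c (n + 1)) t = a * egf c t + b * egf c (q * t) := by
  have hterm : ∀ n, t ^ n / n ! * c (n + 1) =
      a * (t ^ n / n ! * c n) + b * ((q * t) ^ n / n ! * c n) := fun n => by
    rw [hrec, mul_pow]; ring
  rw [egf, tsum_congr hterm, ((summable_pow_div_factorial_mul hc t).mul_left a).tsum_add
    ((summable_pow_div_factorial_mul hc (q * t)).mul_left b), tsum_mul_left, tsum_mul_left,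
    egf, egf]

end ExpGenFun

theorem stmt_10 (a b q : ℝ) (hq0 : 0 < q) (hq1 : q < 1)
    (c : ℕ → ℝ) (hc0 : c 0 = 1) (hcrec : ∀ n : ℕ, c (n + 1) = (a + b * q ^ n) * c n)
    (x : ℝ → ℝ) (hx : ∀ t, x t = ∑' n : ℕ, t ^ n / n.factorial * c n) :
    ∀ t : ℝ, HasDerivAt x (a * x t + b * x (q * t)) t := by
  have hqn (n : ℕ) : |q ^ n| ≤ 1 := by
    rw [abs_pow, abs_of_pos hq0]
    exact pow_le_one₀ hq0.le hq1.le
  have hc : ∀ n, |c n| ≤ (|a| + |b|) ^ n := abs_le_pow_of_succ_eq_mul hc0 hcrec fun n =>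
    calc |a + b * q ^ n| ≤ |a| + |b| * |q ^ n| := (abs_add_le _ _).trans_eq (by rw [abs_mul])
      _ ≤ |a| + |b| := by gcongr; exact mul_le_of_le_one_right (abs_nonneg b) (hqn n)
  obtain rfl : x = egf c := funext hx
  intro t
  rw [← egf_succ_eq_of_succ_eq hc hcrec]
  exact hasDerivAt_egf hc t
end
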